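/- Let −1 < D < C ≤ 1 be real and let f be analytic on 𝔻 with f(0) = 0, f'(0) = 1, and |z·f'(z) − f(z)| < |C·f(z) − D·z·f'(z)| for all z ∈ 𝔻 with z ≠ 0 (i.e. f ∈ S*[C,D], the Janowski starlike class). Suppose that either (i) (1 − arcsinh(1))·(1 − D²) < 1 − C·D ≤ 1 − D² and C − D ≤ (1 − D)·arcsinh(1), or (ii) 1 − D² ≤ 1 − C·D < (1 + arcsinh(1))·(1 − D²) and C − D ≤ (1 + D)·arcsinh(1). Then for every z ∈ 𝔻 with z ≠ 0, f(z) ≠ 0 and z·f'(z)/f(z) ∈ Ω_ρ; that is, S*[C,D] ⊂ S*_ρ. -/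

import Mathlib

open Complex

/-- Principal branch of the complex inverse hyperbolic sine. -/
noncomputable def carcsinh (z : ℂ) : ℂ := Complex.log (z + (1 + z ^ 2) ^ ((1 : ℂ) / 2))

/-- The function `ρ(z) = 1 + arcsinh z`. -/
noncomputable def ρ (z : ℂ) : ℂ := 1 + carcsinh z

/-- The open unit disk in `ℂ`. -/
def unitDisk : Set ℂ := {z : ℂ | ‖z‖ < 1}

/-- The petal-shaped domain `Ω_ρ = ρ '' 𝔻`. -/
noncomputable def OmegaRho : Set ℂ := ρ '' unitDisk

/-!
The Janowski condition `‖w - 1‖ < ‖C - D w‖` on `w = z f'(z) / f(z)` places `w` in the disk with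
centre `(1 - CD)/(1 - D²)` and radius `(C - D)/(1 - D²)`. Its farthest point from `1` is at distance
`(C - D)/(1 - |D|)`, which the hypotheses bound by `arsinh 1`. Finally the disk
`‖w - 1‖ < arsinh 1` lies in `Ω_ρ`: for `v = w - 1` the point `u = sinh v` satisfies
`‖u‖ ≤ sinh ‖v‖ < 1`, and since `|Im v| < π/2` the principal branches give `cosh v` as the square
root of `1 + u²` and `v` as the logarithm of `sinh v + cosh v = exp v`, so `ρ u = w`.
-/

namespace Complex

lemma norm_sinh_le (z : ℂ) : ‖sinh z‖ ≤ Real.sinh ‖z‖ :=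
  (hasSum_sinh z).norm_le_of_bounded (Real.hasSum_sinh ‖z‖) fun n => by
    rw [norm_div, norm_pow, norm_natCast]

lemma cosh_re (z : ℂ) : (cosh z).re = Real.cosh z.re * Real.cos z.im := by
  conv_lhs => rw [← re_add_im z]
  rw [cosh_add, cosh_mul_I, sinh_mul_I, ← ofReal_cosh, ← ofReal_sinh, ← ofReal_cos,
    ← ofReal_sin]
  simp [cos_ofReal_re]

lemma cosh_re_pos {z : ℂ} (hz : |z.im| < Real.pi / 2) : 0 < (cosh z).re := by
  rw [cosh_re]
  exact mul_pos (Real.cosh_pos _) (Real.cos_pos_of_mem_Ioo (abs_lt.mp hz))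

lemma one_add_sinh_sq_cpow_half {z : ℂ} (hz : |z.im| < Real.pi / 2) :
    (1 + sinh z ^ 2) ^ ((1 : ℂ) / 2) = cosh z := by
  rw [add_comm, ← cosh_sq, one_div, sq_cpow_two_inv (cosh_re_pos hz)]

end Complex

lemma carcsinh_sinh {z : ℂ} (hz : |z.im| < Real.pi / 2) : carcsinh (sinh z) = z := by
  obtain ⟨hlo, hhi⟩ := abs_lt.mp hz
  rw [carcsinh, one_add_sinh_sq_cpow_half hz, sinh_add_cosh,
    log_exp (by linarith [Real.pi_pos]) (by linarith [Real.pi_pos])]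

lemma arsinh_one_lt_one : Real.arsinh 1 < 1 := by
  rw [← Real.sinh_lt_sinh, Real.sinh_arsinh, Real.self_lt_sinh_iff]
  exact one_pos

lemma ball_one_arsinh_one_subset_OmegaRho : Metric.ball 1 (Real.arsinh 1) ⊆ OmegaRho := by
  intro w hw
  rw [mem_ball_iff_norm] at hw
  have him : |(w - 1).im| < Real.pi / 2 := calc
    |(w - 1).im| ≤ ‖w - 1‖ := abs_im_le_norm _
    _ < 1 := hw.trans arsinh_one_lt_one
    _ < Real.pi / 2 := by linarith [Real.pi_gt_three]
  refine ⟨sinh (w - 1), ?_, by rw [ρ, carcsinh_sinh him]; ring⟩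
  calc ‖sinh (w - 1)‖ ≤ Real.sinh ‖w - 1‖ := norm_sinh_le _
    _ < Real.sinh (Real.arsinh 1) := Real.sinh_lt_sinh.mpr hw
    _ = 1 := Real.sinh_arsinh 1

section Janowski

variable {C D : ℝ}

lemma ne_zero_of_norm_sub_lt_norm_sub {a b : ℂ} (hD : |D| ≤ 1)
    (h : ‖b - a‖ < ‖(C : ℂ) * a - D * b‖) : a ≠ 0 := by
  rintro rfl
  have hb : ‖b‖ < |D| * ‖b‖ := by simpa using h
  nlinarith [norm_nonneg b]

lemma norm_div_sub_one_lt_norm_sub {a b : ℂ} (ha : a ≠ 0)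
    (h : ‖b - a‖ < ‖(C : ℂ) * a - D * b‖) : ‖b / a - 1‖ < ‖(C : ℂ) - D * (b / a)‖ := by
  have hsub : b - a = a * (b / a - 1) := by field_simp
  have hjan : (C : ℂ) * a - D * b = a * (C - D * (b / a)) := by field_simp
  rw [hsub, hjan, norm_mul, norm_mul] at h
  exact lt_of_mul_lt_mul_left h (norm_nonneg a)

lemma mem_ball_of_norm_sub_one_lt_norm_sub (hD : D ^ 2 < 1) {w : ℂ}
    (hw : ‖w - 1‖ < ‖(C : ℂ) - D * w‖) :
    w ∈ Metric.ball (((1 - C * D) / (1 - D ^ 2) : ℝ) : ℂ) (|C - D| / (1 - D ^ 2)) := by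
  have hD' : 0 < 1 - D ^ 2 := by linarith
  rw [Metric.mem_ball, dist_eq, ← sq_lt_sq₀ (norm_nonneg _) (by positivity)]
  rw [← sq_lt_sq₀ (norm_nonneg _) (norm_nonneg _)] at hw
  simp only [Complex.sq_norm, normSq_apply, sub_re, sub_im, mul_re, mul_im, ofReal_re, ofReal_im,
    one_re, one_im] at hw ⊢
  rw [div_pow, sq_abs, lt_div_iff₀ (by positivity)]
  field_simp
  nlinarith

lemma janowski_radius_add_dist_eq (hD : |D| < 1) :
    |C - D| / (1 - D ^ 2) + dist ((1 - C * D) / (1 - D ^ 2)) 1 = |C - D| / (1 - |D|) := by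
  have hfactor : 1 - D ^ 2 = (1 - |D|) * (1 + |D|) := by rw [← sq_abs D]; ring
  have hpos : 0 < 1 - |D| := by linarith
  have hne : 1 - D ^ 2 ≠ 0 := by rw [hfactor]; positivity
  have hcenter : (1 - C * D) / (1 - D ^ 2) - 1 = D * (D - C) / (1 - D ^ 2) := by
    field_simp; ring
  rw [Real.dist_eq, hcenter, abs_div, abs_mul, abs_sub_comm D, abs_of_pos (a := 1 - D ^ 2)
    (by rw [hfactor]; positivity), hfactor]
  field_simp

end Janowski

theorem janowski_subset_SstarRho_general (C D : ℝ) (hD : -1 < D) (hDC : D < C) (hC : C ≤ 1)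
    (f : ℂ → ℂ)
    (hJan : ∀ z ∈ unitDisk, z ≠ 0 →
      ‖z * deriv f z - f z‖ <
        ‖(C : ℂ) * f z - (D : ℂ) * (z * deriv f z)‖)
    (h : ((1 - Real.arsinh 1) * (1 - D ^ 2) < 1 - C * D ∧ 1 - C * D ≤ 1 - D ^ 2 ∧
            C - D ≤ (1 - D) * Real.arsinh 1) ∨
          (1 - D ^ 2 ≤ 1 - C * D ∧ 1 - C * D < (1 + Real.arsinh 1) * (1 - D ^ 2) ∧
            C - D ≤ (1 + D) * Real.arsinh 1)) :
    ∀ z ∈ unitDisk, z ≠ 0 → f z ≠ 0 ∧ z * deriv f z / f z ∈ OmegaRho := by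
  have hD1 : |D| < 1 := abs_lt.mpr ⟨hD, hDC.trans_le hC⟩
  have hradius : C - D ≤ (1 - |D|) * Real.arsinh 1 := by
    rcases h with ⟨-, hCD, hle⟩ | ⟨hCD, -, hle⟩
    · rwa [abs_of_nonneg (by nlinarith)]
    · rwa [abs_of_nonpos (by nlinarith), sub_neg_eq_add]
  intro z hz hz0
  have hJz := hJan z hz hz0
  have hfz := ne_zero_of_norm_sub_lt_norm_sub hD1.le hJz
  refine ⟨hfz, ball_one_arsinh_one_subset_OmegaRho <| Metric.ball_subset_ball' ?_ <|
    mem_ball_of_norm_sub_one_lt_norm_sub ((sq_lt_one_iff_abs_lt_one D).mpr hD1)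
      (norm_div_sub_one_lt_norm_sub hfz hJz)⟩
  rw [dist_eq, ← ofReal_one, ← ofReal_sub, norm_real, ← dist_eq_norm,
    janowski_radius_add_dist_eq hD1, abs_of_pos (sub_pos.mpr hDC), div_le_iff₀ (by linarith)]
  linarith

/-- If `f` is Janowski starlike (`f ∈ S*[C,D]`, `-1 < D < C ≤ 1`) and either
(i) `(1 - arcsinh 1)(1 - D²) < 1 - CD ≤ 1 - D²` and `C - D ≤ (1 - D) arcsinh 1`, or
(ii) `1 - D² ≤ 1 - CD < (1 + arcsinh 1)(1 - D²)` and `C - D ≤ (1 + D) arcsinh 1`,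
then `f ∈ S*_ρ`. -/
theorem janowski_subset_SstarRho (C D : ℝ) (hD : -1 < D) (hDC : D < C) (hC : C ≤ 1)
    (f : ℂ → ℂ) (hf : AnalyticOnNhd ℂ f unitDisk) (hf0 : f 0 = 0) (hf1 : deriv f 0 = 1)
    (hJan : ∀ z ∈ unitDisk, z ≠ 0 →
      ‖z * deriv f z - f z‖ <
        ‖(C : ℂ) * f z - (D : ℂ) * (z * deriv f z)‖)
    (h : ((1 - Real.arsinh 1) * (1 - D ^ 2) < 1 - C * D ∧ 1 - C * D ≤ 1 - D ^ 2 ∧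
            C - D ≤ (1 - D) * Real.arsinh 1) ∨
          (1 - D ^ 2 ≤ 1 - C * D ∧ 1 - C * D < (1 + Real.arsinh 1) * (1 - D ^ 2) ∧
            C - D ≤ (1 + D) * Real.arsinh 1)) :
    ∀ z ∈ unitDisk, z ≠ 0 → f z ≠ 0 ∧ z * deriv f z / f z ∈ OmegaRho :=
  janowski_subset_SstarRho_general C D hD hDC hC f hJan h
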